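/- Let x̄ be a list of variables and α a solved basic formula. Let x̄' be the variables among x̄ that are reachable in α from the free variables of ∃x̄. α, and let α' be the conjunction of those conjuncts of α that are reachable from the free variables of ∃x̄. α. Then ∃x̄. α and ∃x̄'. α' are equivalent in the extended theory of trees, i.e. satisfied by exactly the same valuations in the structure 𝒯 of trees. -/

import Mathlib

set_option linter.unusedVariables false


/-- A many-sorted signature: sorts and generators (function symbols),
each generator `g` having argument sorts `src g` and target sort `tgt g`. -/
structure Sig where
  Srt : Type
  Gen : Type
  tgt : Gen → Srt
  src : Gen → List Srt

namespace Sig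

variable (σ : Sig)

/-- The generators of a sort `s`. -/
def Gens (s : σ.Srt) : Set σ.Gen := { g | σ.tgt g = s }

/-- A labeling of positions (lists of natural numbers) by generators is a valid
tree labeling if children exist exactly according to arity and have the right sorts. -/
def IsLabeling (L : List ℕ → Option σ.Gen) : Prop :=
  (∀ p, L p = none → ∀ i, L (p ++ [i]) = none) ∧
  (∀ p g, L p = some g → ∀ i, ((L (p ++ [i])).isSome ↔ i < (σ.src g).length)) ∧
  (∀ p g i g', L p = some g → L (p ++ [i]) = some g' →
      (σ.src g)[i]? = some (σ.tgt g'))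

/-- A (possibly infinite) tree of sort `s`. -/
structure Tree (s : σ.Srt) where
  L : List ℕ → Option σ.Gen
  isLab : σ.IsLabeling L
  root : ∃ g, L [] = some g ∧ σ.tgt g = s

variable {σ}

/-- A tree is finite if it has finitely many nodes. -/
def Tree.IsFinite {s : σ.Srt} (t : σ.Tree s) : Prop :=
  { p : List ℕ | (t.L p).isSome }.Finite

/-- The tree has depth at most `d`. -/
def Tree.DepthLE {s : σ.Srt} (t : σ.Tree s) (d : ℕ) : Prop :=
  ∀ p, (t.L p).isSome → p.length ≤ d

variable (σ)

/-- Build a tree with root labeled `g` from given immediate subtrees. -/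
def build (g : σ.Gen) (c : ∀ i : Fin (σ.src g).length, σ.Tree ((σ.src g).get i)) :
    σ.Tree (σ.tgt g) where
  L := fun p =>
    match p with
    | [] => some g
    | i :: q => if h : i < (σ.src g).length then (c ⟨i, h⟩).L q else none
  isLab := by
    refine ⟨?_, ?_, ?_⟩
    · intro p hp i
      match p with
      | [] => simp at hp
      | j :: q =>
        simp only [List.cons_append]
        by_cases h : j < (σ.src g).length
        · simp only [dif_pos h] at hp ⊢
          exact (c ⟨j, h⟩).isLab.1 q hp i
        · simp only [dif_neg h]
    · intro p g' hp i
      match p with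
      | [] =>
        injection hp with hg
        subst hg
        by_cases h : i < (σ.src g).length
        · simp only [List.nil_append, dif_pos h]
          obtain ⟨g₀, h₀, -⟩ := (c ⟨i, h⟩).root
          simp [h₀, h]
        · simp [List.nil_append, dif_neg h, h]
      | j :: q =>
        by_cases h : j < (σ.src g).length
        · simp only [dif_pos h] at hp
          simp only [List.cons_append, dif_pos h]
          exact (c ⟨j, h⟩).isLab.2.1 q g' hp i
        · simp only [dif_neg h] at hp
          cases hp
    · intro p g' i g'' hp hpi
      match p with
      | [] =>
        injection hp with hg
        subst hg
        by_cases h : i < (σ.src g).length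
        · simp only [List.nil_append, dif_pos h] at hpi
          obtain ⟨g₀, h₀, htgt⟩ := (c ⟨i, h⟩).root
          rw [h₀, Option.some.injEq] at hpi
          subst hpi
          rw [List.getElem?_eq_getElem h]
          exact congrArg some htgt.symm
        · simp only [List.nil_append, dif_neg h] at hpi
          cases hpi
      | j :: q =>
        by_cases h : j < (σ.src g).length
        · simp only [dif_pos h] at hp
          simp only [List.cons_append, dif_pos h] at hpi
          exact (c ⟨j, h⟩).isLab.2.2 q g' i g'' hp hpi
        · simp only [dif_neg h] at hp
          cases hp
  root := ⟨g, rfl, rfl⟩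

/-- Sorts with no infinite trees. -/
def S0I : Set σ.Srt := { s | ∀ t : σ.Tree s, t.IsFinite }
/-- Sorts with no finite trees. -/
def S0F : Set σ.Srt := { s | ∀ t : σ.Tree s, ¬ t.IsFinite }
/-- Sorts with only finitely many finite trees. -/
def SFF : Set σ.Srt := { s | { t : σ.Tree s | t.IsFinite }.Finite }
/-- Sorts with only finitely many infinite trees. -/
def SFI : Set σ.Srt := { s | { t : σ.Tree s | ¬ t.IsFinite }.Finite }
/-- Sorts with exactly one infinite tree. -/
def S1I : Set σ.Srt := { s | ∃! t : σ.Tree s, ¬ t.IsFinite }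

/-- Terms of the (extended) first-order language of trees. Variables are
pairs of a sort and a number. -/
inductive Tm : σ.Srt → Type
  | var (s : σ.Srt) (n : ℕ) : Tm s
  | app (g : σ.Gen) (args : ∀ i : Fin (σ.src g).length, Tm ((σ.src g).get i)) :
      Tm (σ.tgt g)

/-- Valuations assign trees to (sorted) variables. -/
def Val := ∀ s : σ.Srt, ℕ → σ.Tree s

variable {σ}

/-- Evaluation of a term in the structure of trees under a valuation. -/
def Tm.eval (ρ : σ.Val) : ∀ {s : σ.Srt}, σ.Tm s → σ.Tree s
  | _, .var s n => ρ s n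
  | _, .app g args => σ.build g (fun i => (args i).eval ρ)

/-- The (sorted) free variables of a term. -/
def Tm.fv : ∀ {s : σ.Srt}, σ.Tm s → Set ((s : σ.Srt) × ℕ)
  | _, .var s n => {⟨s, n⟩}
  | _, .app _ args => ⋃ i, (args i).fv

/-- A term is flat if it is a variable or a generator applied to variables. -/
def Tm.IsFlat : ∀ {s : σ.Srt}, σ.Tm s → Prop
  | _, .var _ _ => True
  | _, .app g args => ∀ i : Fin (σ.src g).length, ∃ n, args i = Tm.var ((σ.src g).get i) n

/-- A term of the form `f(z̄)`. -/
def Tm.IsApp : ∀ {s : σ.Srt}, σ.Tm s → Prop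
  | _, .var _ _ => False
  | _, .app _ _ => True

open Classical in
/-- Update a valuation at one sorted variable. -/
noncomputable def updV (ρ : σ.Val) (s : σ.Srt) (n : ℕ) (t : σ.Tree s) : σ.Val :=
  fun s' m =>
    if h : s' = s then
      (if m = n then cast (congrArg σ.Tree h.symm) t else ρ s' m)
    else ρ s' m

variable (σ)

/-- Formulae of the extended first-order language of trees: equality,
the finiteness predicates `fin`, propositional connectives and sorted quantifiers. -/
inductive Fml : Type
  | tru : Fml
  | fls : Fml
  | eq {s : σ.Srt} (a b : σ.Tm s) : Fml
  | fin {s : σ.Srt} (a : σ.Tm s) : Fml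
  | not (φ : Fml) : Fml
  | and (φ ψ : Fml) : Fml
  | or (φ ψ : Fml) : Fml
  | imp (φ ψ : Fml) : Fml
  | ex (s : σ.Srt) (n : ℕ) (φ : Fml) : Fml
  | all (s : σ.Srt) (n : ℕ) (φ : Fml) : Fml

variable {σ}

/-- Satisfaction of a formula in the structure `𝒯` of trees under a valuation. -/
def Fml.Sat (ρ : σ.Val) : σ.Fml → Prop
  | .tru => True
  | .fls => False
  | .eq a b => a.eval ρ = b.eval ρ
  | .fin a => (a.eval ρ).IsFinite
  | .not φ => ¬ φ.Sat ρ
  | .and φ ψ => φ.Sat ρ ∧ ψ.Sat ρ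
  | .or φ ψ => φ.Sat ρ ∨ ψ.Sat ρ
  | .imp φ ψ => φ.Sat ρ → ψ.Sat ρ
  | .ex s n φ => ∃ t : σ.Tree s, φ.Sat (updV ρ s n t)
  | .all s n φ => ∀ t : σ.Tree s, φ.Sat (updV ρ s n t)

/-- The free variables of a formula. -/
def Fml.fv : σ.Fml → Set ((s : σ.Srt) × ℕ)
  | .tru => ∅
  | .fls => ∅
  | .eq a b => a.fv ∪ b.fv
  | .fin a => a.fv
  | .not φ => φ.fv
  | .and φ ψ => φ.fv ∪ ψ.fv
  | .or φ ψ => φ.fv ∪ ψ.fv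
  | .imp φ ψ => φ.fv ∪ ψ.fv
  | .ex s n φ => φ.fv \ {⟨s, n⟩}
  | .all s n φ => φ.fv \ {⟨s, n⟩}

/-- Two formulae are equivalent in the extended theory of trees if they are
satisfied by exactly the same valuations. -/
def FmlEquiv (φ ψ : σ.Fml) : Prop := ∀ ρ : σ.Val, φ.Sat ρ ↔ ψ.Sat ρ


variable (σ)

/-- A basic formula: a conjunction of equations `v = t` (with `t` a flat term)
and finiteness constraints `fin(u)`, represented by the list of equations
(a sort, the left-hand-side variable, the right-hand-side term) and the list of
`fin`-variables. -/
structure Basic where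
  eqs : List ((s : σ.Srt) × ℕ × σ.Tm s)
  fins : List ((s : σ.Srt) × ℕ)

variable {σ}

/-- Well-formedness of a basic formula: all right-hand sides are flat. -/
def Basic.WF (β : σ.Basic) : Prop := ∀ e ∈ β.eqs, (e.2.2).IsFlat

/-- Satisfaction of a basic formula under a valuation. -/
def Basic.Sat (β : σ.Basic) (ρ : σ.Val) : Prop :=
  (∀ e ∈ β.eqs, ρ e.1 e.2.1 = (e.2.2).eval ρ) ∧
  (∀ u ∈ β.fins, (ρ u.1 u.2).IsFinite)

/-- The variables occurring in a basic formula. -/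
def Basic.vars (β : σ.Basic) : Set ((s : σ.Srt) × ℕ) :=
  { x | (∃ e ∈ β.eqs, (⟨e.1, e.2.1⟩ : (s : σ.Srt) × ℕ) = x ∨ x ∈ (e.2.2).fv) ∨ x ∈ β.fins }

/-- One step of reachability: `y` occurs in the right-hand side of an equation
whose left-hand side is `x`. -/
def Basic.step (β : σ.Basic) (x y : (s : σ.Srt) × ℕ) : Prop :=
  ∃ e ∈ β.eqs, (⟨e.1, e.2.1⟩ : (s : σ.Srt) × ℕ) = x ∧ y ∈ (e.2.2).fv

/-- `y` is reachable from `x` (by a chain of equations, possibly empty). -/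
def Basic.Reach (β : σ.Basic) (x y : (s : σ.Srt) × ℕ) : Prop :=
  Relation.ReflTransGen β.step x y

/-- `y` is properly reachable from `x` (by a nonempty chain of equations). -/
def Basic.ProperReach (β : σ.Basic) (x y : (s : σ.Srt) × ℕ) : Prop :=
  Relation.TransGen β.step x y

open Classical in
/-- The index of an element in a list (used to compare variables in a given ordering). -/
noncomputable def idx {A : Type*} (vs : List A) (x : A) : ℕ :=
  vs.findIdx fun y => decide (y = x)

/-- `x` is smaller than `y` in the variable ordering given by the list `vs`. -/
noncomputable def ltv {A : Type*} (vs : List A) (x y : A) : Prop :=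
  idx vs x < idx vs y

/-- A basic formula is solved with respect to the variable ordering `vs`:
(1) the left-hand-side variables of equations and the `fin`-variables are
pairwise distinct and every equation `x = y` between variables has `x > y`;
(2) `fin(v)` occurs only if the sort of `v` has both finite and infinite trees. -/
noncomputable def Solved (vs : List ((s : σ.Srt) × ℕ)) (β : σ.Basic) : Prop :=
  ((β.eqs.map fun e => (⟨e.1, e.2.1⟩ : (s : σ.Srt) × ℕ)) ++ β.fins).Nodup ∧
  (∀ e ∈ β.eqs, ∀ n : ℕ, e.2.2 = Sig.Tm.var e.1 n →
      ltv vs (⟨e.1, n⟩ : (s : σ.Srt) × ℕ) ⟨e.1, e.2.1⟩) ∧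
  (∀ u ∈ β.fins, (∃ t : σ.Tree u.1, t.IsFinite) ∧ (∃ t : σ.Tree u.1, ¬ t.IsFinite))

/-- `ρ'` agrees with `ρ` outside the set `V` of variables. -/
def AgreesOff (ρ ρ' : σ.Val) (V : Set ((s : σ.Srt) × ℕ)) : Prop :=
  ∀ (s : σ.Srt) (n : ℕ), (⟨s, n⟩ : (s : σ.Srt) × ℕ) ∉ V → ρ' s n = ρ s n

variable (σ)

/-- A normal formula of depth at most 2,
`¬(∃x̄. α ∧ ⋀ᵢ ¬(∃ȳᵢ. βᵢ))`, given by the bound variables `x̄`,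
the basic formula `α` and the list of pairs `(ȳᵢ, βᵢ)`. -/
structure NF2 where
  xs : List ((s : σ.Srt) × ℕ)
  base : σ.Basic
  inner : List (List ((s : σ.Srt) × ℕ) × σ.Basic)

variable {σ}

/-- Well-formedness of the basic subformulae of a normal formula of depth ≤ 2. -/
def NF2.WF (φ : σ.NF2) : Prop := φ.base.WF ∧ ∀ p ∈ φ.inner, (p.2).WF

/-- Satisfaction of the inner part `∃x̄. α ∧ ⋀ᵢ ¬(∃ȳᵢ. βᵢ)` of a normal formula
of depth ≤ 2 (this is the shape of a fully simplified formula). -/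
def NF2.PosSat (φ : σ.NF2) (ρ : σ.Val) : Prop :=
  ∃ ρ₁ : σ.Val, AgreesOff ρ ρ₁ { x | x ∈ φ.xs } ∧ φ.base.Sat ρ₁ ∧
    ∀ p ∈ φ.inner, ¬ ∃ ρ₂ : σ.Val, AgreesOff ρ₁ ρ₂ { x | x ∈ p.1 } ∧ (p.2).Sat ρ₂

/-- Satisfaction of a normal formula `¬(∃x̄. α ∧ ⋀ᵢ ¬(∃ȳᵢ. βᵢ))` of depth ≤ 2. -/
def NF2.Sat (φ : σ.NF2) (ρ : σ.Val) : Prop := ¬ φ.PosSat ρ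

/-- The free variables of a normal formula of depth ≤ 2. -/
def NF2.fv (φ : σ.NF2) : Set ((s : σ.Srt) × ℕ) :=
  (φ.base.vars \ { x | x ∈ φ.xs }) ∪
    { x | ∃ p ∈ φ.inner, x ∈ (p.2).vars ∧ x ∉ φ.xs ∧ x ∉ p.1 }

/-- All variables occurring (bound or free) in a normal formula of depth ≤ 2. -/
def NF2.allVars (φ : σ.NF2) : Set ((s : σ.Srt) × ℕ) :=
  φ.base.vars ∪ { x | x ∈ φ.xs } ∪ { x | ∃ p ∈ φ.inner, x ∈ p.1 ∨ x ∈ (p.2).vars }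

open Classical in
/-- `β` with all conjuncts also occurring in `α` removed (written `β*`). -/
noncomputable def bstar (α β : σ.Basic) : σ.Basic where
  eqs := β.eqs.filter fun e => decide (e ∉ α.eqs)
  fins := β.fins.filter fun u => decide (u ∉ α.fins)

/-- `β` contains an equation `u = f(w̄)`. -/
def HasEqApp (β : σ.Basic) (u : (s : σ.Srt) × ℕ) : Prop :=
  ∃ e ∈ β.eqs, (⟨e.1, e.2.1⟩ : (s : σ.Srt) × ℕ) = u ∧ (e.2.2).IsApp

/-- `α` contains an equation with left-hand side `u`. -/
def HasLhs (α : σ.Basic) (u : (s : σ.Srt) × ℕ) : Prop :=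
  ∃ e ∈ α.eqs, (⟨e.1, e.2.1⟩ : (s : σ.Srt) × ℕ) = u

/-- Definition of an instantiable variable of a normal formula
`¬(∃x̄. α ∧ ⋀ᵢ ¬(∃ȳᵢ. βᵢ))` of depth at most 2 (Definition of the paper):
`u` is free or among `x̄` and one of the four conditions holds. -/
def NF2.Instantiable (φ : σ.NF2) (u : (s : σ.Srt) × ℕ) : Prop :=
  (u ∈ φ.fv ∨ u ∈ φ.xs) ∧
  ( ((σ.Gens u.1).Finite ∧ ∃ p ∈ φ.inner,
        HasEqApp (bstar φ.base p.2) u ∧ ¬ (p.2).ProperReach u u)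
  ∨ (u.1 ∈ σ.SFF ∩ σ.SFI ∧ (∃ p ∈ φ.inner, u ∈ (bstar φ.base p.2).vars) ∧
        ¬ HasLhs φ.base u)
  ∨ (u.1 ∈ σ.SFF ∧ u ∈ φ.base.fins ∧ ∃ p ∈ φ.inner, u ∈ (bstar φ.base p.2).vars)
  ∨ (u.1 ∈ σ.SFI ∧ ∃ p ∈ φ.inner,
        (bstar φ.base p.2).eqs = [] ∧ u ∈ (bstar φ.base p.2).fins) )

/-- A normal formula of depth at most 2 is solved (conditions (1)–(5) of the paper):
its basic subformulae are solved with respect to an ordering compatible with binding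
depth, the equations of `α` are included in each `βᵢ`, each `βᵢ` has a conjunct not
in `α`, no variable is instantiable, and all bound variables are reachable from
the free variables of the respective subformula. -/
noncomputable def NF2.IsSolved (φ : σ.NF2) : Prop :=
  (∃ vs : List ((s : σ.Srt) × ℕ), vs.Nodup ∧
    (∀ x ∈ φ.allVars, x ∈ vs) ∧
    (∀ a ∈ φ.fv, ∀ b ∈ φ.xs, ltv vs a b) ∧
    (∀ p ∈ φ.inner, ∀ b ∈ φ.xs, ∀ c ∈ p.1, ltv vs b c) ∧
    (∀ p ∈ φ.inner, ∀ a ∈ φ.fv, ∀ c ∈ p.1, ltv vs a c) ∧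
    Solved vs φ.base ∧ ∀ p ∈ φ.inner, Solved vs p.2) ∧
  (∀ p ∈ φ.inner, ∀ e ∈ φ.base.eqs, e ∈ (p.2).eqs) ∧
  (∀ p ∈ φ.inner, (∃ e ∈ (p.2).eqs, e ∉ φ.base.eqs) ∨ (∃ u ∈ (p.2).fins, u ∉ φ.base.fins)) ∧
  (∀ u : (s : σ.Srt) × ℕ, ¬ φ.Instantiable u) ∧
  (∀ x ∈ φ.xs, ∃ v, v ∈ φ.base.vars ∧ v ∉ φ.xs ∧ φ.base.Reach v x) ∧
  (∀ p ∈ φ.inner, ∀ y ∈ p.1, ∃ v, v ∈ (p.2).vars ∧ v ∉ p.1 ∧ (p.2).Reach v y)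

end Sig

/-- The set of variables of `α` reachable (via chains of equations) from the free
variables of `∃x̄. α`. -/
def reachSet (σ : Sig) (xs : List ((s : σ.Srt) × ℕ)) (α : σ.Basic) :
    Set ((s : σ.Srt) × ℕ) :=
  { u | ∃ v, v ∈ α.vars ∧ v ∉ xs ∧ Sig.Basic.Reach α v u }

/-- Satisfaction of `∃x̄. α` under a valuation `ρ`: some valuation agreeing with
`ρ` outside `x̄` satisfies `α`. -/
def SatEx (σ : Sig) (xs : List ((s : σ.Srt) × ℕ)) (α : σ.Basic) (ρ : σ.Val) : Prop :=
  ∃ ρ' : σ.Val, Sig.AgreesOff ρ ρ' { x | x ∈ xs } ∧ α.Sat ρ'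
/-!
Every conjunct reachable from the free variables mentions only reachable variables, so a
solution of `α` restricted to the reachable variables solves `α'`. Conversely, the bound
variables outside the reachable set occur in no reachable conjunct. Their equations form a
system with distinct left-hand sides whose equations between variables decrease in the
variable order; such a system has a solution for arbitrary values of the remaining variables:
unfold the equations into possibly infinite trees, where chasing equations between variables
terminates. The unreachable `fin`-variables are first given finite values, which exist
because `α` is solved.
-/

namespace Sig

variable {σ : Sig}

abbrev Var (σ : Sig) : Type := (s : σ.Srt) × ℕ

abbrev lhs (e : (s : σ.Srt) × ℕ × σ.Tm s) : σ.Var := ⟨e.1, e.2.1⟩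

theorem Tree.ext {s : σ.Srt} {t t' : σ.Tree s} (h : t.L = t'.L) : t = t' := by
  cases t; cases t'; cases h; rfl

theorem Tm.eval_congr {ρ ρ' : σ.Val} : ∀ {s : σ.Srt} (t : σ.Tm s),
    (∀ v ∈ t.fv, ρ' v.1 v.2 = ρ v.1 v.2) → t.eval ρ' = t.eval ρ
  | _, .var s n, h => h ⟨s, n⟩ rfl
  | _, .app g args, h => by
      simp only [Tm.eval]
      congr 1
      funext i
      exact Tm.eval_congr (args i) fun v hv => h v (Set.mem_iUnion.2 ⟨i, hv⟩)

def VarEqsDecrease (μ : σ.Var → ℕ) (es : List ((s : σ.Srt) × ℕ × σ.Tm s)) : Prop :=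
  ∀ e ∈ es, ∀ n, e.2.2 = .var e.1 n → μ ⟨e.1, n⟩ < μ (lhs e)

def Tm.rank (μ : σ.Var → ℕ) : {s : σ.Srt} → σ.Tm s → ℕ
  | _, .var s n => μ ⟨s, n⟩ + 1
  | _, .app _ _ => 0

open Classical in
noncomputable def rhsOf (es : List ((s : σ.Srt) × ℕ × σ.Tm s)) (x : σ.Var) :
    Option (σ.Tm x.1) :=
  if h : ∃ t : σ.Tm x.1, ⟨x.1, x.2, t⟩ ∈ es then some h.choose else none

section RhsOf

variable {es : List ((s : σ.Srt) × ℕ × σ.Tm s)}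

theorem mem_of_rhsOf_eq_some {x : σ.Var} {t : σ.Tm x.1} (h : rhsOf es x = some t) :
    ⟨x.1, x.2, t⟩ ∈ es := by
  unfold rhsOf at h
  split at h
  next hex =>
    cases h
    exact hex.choose_spec
  next => cases h

theorem rhsOf_eq_some (hnd : (es.map lhs).Nodup) {x : σ.Var} {t : σ.Tm x.1}
    (h : ⟨x.1, x.2, t⟩ ∈ es) : rhsOf es x = some t := by
  have hex : ∃ t : σ.Tm x.1, ⟨x.1, x.2, t⟩ ∈ es := ⟨t, h⟩
  rw [rhsOf, dif_pos hex, Option.some.injEq]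
  simpa using List.inj_on_of_nodup_map hnd hex.choose_spec h rfl

theorem rhsOf_eq_none {x : σ.Var} (h : x ∉ es.map lhs) : rhsOf es x = none :=
  dif_neg fun ⟨t, ht⟩ => h (List.mem_map.2 ⟨_, ht, rfl⟩)

theorem rank_lt_of_rhsOf_eq_some {μ : σ.Var → ℕ} (hdec : VarEqsDecrease μ es)
    {s : σ.Srt} {n : ℕ} {t : σ.Tm s} (h : rhsOf es ⟨s, n⟩ = some t) :
    t.rank μ < μ ⟨s, n⟩ + 1 := by
  have hx := hdec _ (mem_of_rhsOf_eq_some h)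
  cases t with
  | var s m => exact Nat.succ_lt_succ (hx m rfl)
  | app => exact Nat.succ_pos _

end RhsOf

/-- The labelling of the tree obtained from `t` by replacing, over and over, each left-hand
side of `es` by its right-hand side and each other variable `x` by `ρ₀ x`. -/
noncomputable def unfoldLabel (es : List ((s : σ.Srt) × ℕ × σ.Tm s)) (μ : σ.Var → ℕ)
    (hdec : VarEqsDecrease μ es) (ρ₀ : σ.Val) :
    {s : σ.Srt} → σ.Tm s → List ℕ → Option σ.Gen
  | _, .app g _, [] => some g
  | _, .app g args, i :: q =>
      if h : i < (σ.src g).length then unfoldLabel es μ hdec ρ₀ (args ⟨i, h⟩) q else none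
  | _, .var s n, p =>
      match h : rhsOf es ⟨s, n⟩ with
      | none => (ρ₀ s n).L p
      | some t => unfoldLabel es μ hdec ρ₀ t p
  -- entering an argument shortens the path; following an equation lowers the rank
  termination_by s t p => (p.length, t.rank μ)
  decreasing_by
    · exact Prod.Lex.left _ _ (by simp)
    · exact Prod.Lex.right _ (rank_lt_of_rhsOf_eq_some hdec h)

section Unfold

variable (es : List ((s : σ.Srt) × ℕ × σ.Tm s)) (μ : σ.Var → ℕ)
    (hdec : VarEqsDecrease μ es) (ρ₀ : σ.Val)

local notation "ℒ" => unfoldLabel es μ hdec ρ₀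

theorem unfoldLabel_app_nil (g : σ.Gen)
    (args : ∀ i : Fin (σ.src g).length, σ.Tm ((σ.src g).get i)) :
    ℒ (.app g args) [] = some g := by
  rw [unfoldLabel]

theorem unfoldLabel_app_cons (g : σ.Gen)
    (args : ∀ i : Fin (σ.src g).length, σ.Tm ((σ.src g).get i)) (i : ℕ) (q : List ℕ) :
    ℒ (.app g args) (i :: q) =
      if h : i < (σ.src g).length then ℒ (args ⟨i, h⟩) q else none := by
  rw [unfoldLabel]

theorem unfoldLabel_var_of_rhsOf_none {s : σ.Srt} {n : ℕ} (h : rhsOf es ⟨s, n⟩ = none) :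
    ℒ (.var s n) = (ρ₀ s n).L := by
  funext p
  rw [unfoldLabel]
  split <;> simp_all

theorem unfoldLabel_var_of_rhsOf_some {s : σ.Srt} {n : ℕ} {t : σ.Tm s}
    (h : rhsOf es ⟨s, n⟩ = some t) : ℒ (.var s n) = ℒ t := by
  funext p
  rw [unfoldLabel]
  split <;> simp_all

theorem unfoldLabel_eq_tree_or_app : ∀ {s : σ.Srt} (t : σ.Tm s),
    (∃ T : σ.Tree s, ℒ t = T.L) ∨
      ∃ (g : σ.Gen) (args : ∀ i : Fin (σ.src g).length, σ.Tm ((σ.src g).get i)),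
        ∃ _ : σ.tgt g = s, ℒ t = ℒ (.app g args)
  | _, .app g args => .inr ⟨g, args, rfl, rfl⟩
  | _, .var s n => by
      cases h : rhsOf es ⟨s, n⟩ with
      | none => exact .inl ⟨ρ₀ s n, unfoldLabel_var_of_rhsOf_none es μ hdec ρ₀ h⟩
      | some t =>
        rw [unfoldLabel_var_of_rhsOf_some es μ hdec ρ₀ h]
        exact unfoldLabel_eq_tree_or_app t
  termination_by s t => t.rank μ
  decreasing_by exact rank_lt_of_rhsOf_eq_some hdec h

theorem unfoldLabel_root {s : σ.Srt} (t : σ.Tm s) :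
    ∃ g, ℒ t [] = some g ∧ σ.tgt g = s := by
  rcases unfoldLabel_eq_tree_or_app es μ hdec ρ₀ t with ⟨T, hT⟩ | ⟨g, args, rfl, hT⟩
  · exact hT ▸ T.root
  · exact ⟨g, hT ▸ unfoldLabel_app_nil es μ hdec ρ₀ g args, rfl⟩

theorem isLabeling_unfoldLabel_at : ∀ (p : List ℕ) {s : σ.Srt} (t : σ.Tm s),
    (ℒ t p = none → ∀ i, ℒ t (p ++ [i]) = none) ∧
    (∀ g, ℒ t p = some g → ∀ i, ((ℒ t (p ++ [i])).isSome ↔ i < (σ.src g).length)) ∧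
    (∀ g i g', ℒ t p = some g → ℒ t (p ++ [i]) = some g' →
      (σ.src g)[i]? = some (σ.tgt g')) := by
  intro p
  induction p with
  | nil =>
    intro s t
    rcases unfoldLabel_eq_tree_or_app es μ hdec ρ₀ t with ⟨T, hT⟩ | ⟨g, args, rfl, hT⟩
    · rw [hT]
      exact ⟨T.isLab.1 _, T.isLab.2.1 _, T.isLab.2.2 _⟩
    simp only [hT, List.nil_append, unfoldLabel_app_nil, unfoldLabel_app_cons]
    refine ⟨nofun, ?_, ?_⟩
    · rintro _ ⟨⟩ i
      split_ifs with hi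
      · obtain ⟨g₀, h₀, -⟩ := unfoldLabel_root es μ hdec ρ₀ (args ⟨i, hi⟩)
        simp [h₀, hi]
      · simp [hi]
    · rintro _ i g' ⟨⟩ h
      split_ifs at h with hi
      obtain ⟨g₀, h₀, hg₀⟩ := unfoldLabel_root es μ hdec ρ₀ (args ⟨i, hi⟩)
      rw [h₀, Option.some.injEq] at h
      subst h
      simp [hi, hg₀]
  | cons j q ih =>
    intro s t
    rcases unfoldLabel_eq_tree_or_app es μ hdec ρ₀ t with ⟨T, hT⟩ | ⟨g, args, rfl, hT⟩
    · rw [hT]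
      exact ⟨T.isLab.1 _, T.isLab.2.1 _, T.isLab.2.2 _⟩
    simp only [hT, List.cons_append, unfoldLabel_app_cons]
    split_ifs with hj
    · exact ih _
    · simp

noncomputable def unfoldTree {s : σ.Srt} (t : σ.Tm s) : σ.Tree s where
  L := ℒ t
  isLab := ⟨fun p => (isLabeling_unfoldLabel_at es μ hdec ρ₀ p t).1,
    fun p => (isLabeling_unfoldLabel_at es μ hdec ρ₀ p t).2.1,
    fun p => (isLabeling_unfoldLabel_at es μ hdec ρ₀ p t).2.2⟩
  root := unfoldLabel_root es μ hdec ρ₀ t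

theorem unfoldTree_app (g : σ.Gen)
    (args : ∀ i : Fin (σ.src g).length, σ.Tm ((σ.src g).get i)) :
    unfoldTree es μ hdec ρ₀ (.app g args) =
      σ.build g fun i => unfoldTree es μ hdec ρ₀ (args i) := by
  apply Tree.ext
  funext p
  cases p with
  | nil => exact unfoldLabel_app_nil es μ hdec ρ₀ g args
  | cons i q => exact unfoldLabel_app_cons es μ hdec ρ₀ g args i q

theorem unfoldTree_eq_eval {s : σ.Srt} (t : σ.Tm s) :
    unfoldTree es μ hdec ρ₀ t = t.eval fun s n => unfoldTree es μ hdec ρ₀ (.var s n) := by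
  induction t with
  | var => rfl
  | app g args ih =>
    rw [unfoldTree_app]
    exact congrArg (σ.build g) (funext ih)

end Unfold

theorem exists_solution {es : List ((s : σ.Srt) × ℕ × σ.Tm s)} (hnd : (es.map lhs).Nodup)
    (μ : σ.Var → ℕ) (hdec : VarEqsDecrease μ es)
    (ρ₀ : σ.Val) :
    ∃ ρ : σ.Val, (∀ e ∈ es, ρ e.1 e.2.1 = e.2.2.eval ρ) ∧
      ∀ x ∉ es.map lhs, ρ x.1 x.2 = ρ₀ x.1 x.2 := by
  refine ⟨fun s n => unfoldTree es μ hdec ρ₀ (.var s n), ?_, fun x hx => ?_⟩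
  · rintro ⟨s, n, t⟩ he
    exact (Tree.ext (unfoldLabel_var_of_rhsOf_some es μ hdec ρ₀ (rhsOf_eq_some hnd he))).trans
      (unfoldTree_eq_eval es μ hdec ρ₀ t)
  · exact Tree.ext (unfoldLabel_var_of_rhsOf_none es μ hdec ρ₀ (rhsOf_eq_none hx))

def Basic.StepClosed (α : σ.Basic) (R : Set σ.Var) : Prop :=
  ∀ x y, α.step x y → x ∈ R → y ∈ R

theorem Basic.StepClosed.eval_eq {α : σ.Basic} {R : Set σ.Var} (hR : α.StepClosed R)
    {e : (s : σ.Srt) × ℕ × σ.Tm s} (he : e ∈ α.eqs) (hx : lhs e ∈ R) {ρ ρ' : σ.Val}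
    (hρ : ∀ x ∈ R, ρ' x.1 x.2 = ρ x.1 x.2) : e.2.2.eval ρ' = e.2.2.eval ρ :=
  Tm.eval_congr _ fun v hv => hρ v (hR _ _ ⟨e, he, rfl, hv⟩ hx)

theorem Basic.StepClosed.sat_of_agreeOn {α β : σ.Basic} {R : Set σ.Var} (hR : α.StepClosed R)
    (heqs : ∀ e ∈ β.eqs, e ∈ α.eqs ∧ lhs e ∈ R)
    (hfins : ∀ u ∈ β.fins, u ∈ α.fins ∧ u ∈ R) {ρ ρ' : σ.Val} (hsat : α.Sat ρ)
    (hρ : ∀ x ∈ R, ρ' x.1 x.2 = ρ x.1 x.2) : β.Sat ρ' := by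
  refine ⟨fun e he => ?_, fun u hu => ?_⟩
  · obtain ⟨heα, hx⟩ := heqs e he
    rw [hρ _ hx, hsat.1 e heα, hR.eval_eq heα hx hρ]
  · obtain ⟨huα, hu⟩ := hfins u hu
    exact hρ u hu ▸ hsat.2 u huα

theorem exists_val_finite_on {F : List σ.Var} (hF : ∀ u ∈ F, ∃ t : σ.Tree u.1, t.IsFinite)
    {R : Set σ.Var} {ρ : σ.Val} (hρ : ∀ u ∈ F, u ∈ R → (ρ u.1 u.2).IsFinite) :
    ∃ ρ₁ : σ.Val, (∀ u ∈ F, (ρ₁ u.1 u.2).IsFinite) ∧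
      ∀ x, x ∈ R ∨ x ∉ F → ρ₁ x.1 x.2 = ρ x.1 x.2 := by
  have h : ∀ u : σ.Var, ∃ t : σ.Tree u.1,
      (u ∈ F → t.IsFinite) ∧ (u ∈ R ∨ u ∉ F → t = ρ u.1 u.2) := by
    intro u
    by_cases hu : u ∈ F ∧ u ∉ R
    · obtain ⟨t, ht⟩ := hF u hu.1
      exact ⟨t, fun _ => ht, by tauto⟩
    · exact ⟨ρ u.1 u.2, fun h => hρ u h (by tauto), fun _ => rfl⟩
  choose f hf using h
  exact ⟨fun s n => f ⟨s, n⟩, fun u hu => (hf u).1 hu, fun x hx => (hf x).2 hx⟩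

theorem Basic.mem_vars_of_mem_map_lhs {α : σ.Basic} {x : σ.Var} (h : x ∈ α.eqs.map lhs) :
    x ∈ α.vars := by
  obtain ⟨e, he, rfl⟩ := List.mem_map.1 h
  exact .inl ⟨e, he, .inl rfl⟩

theorem Basic.StepClosed.exists_sat_extending {α : σ.Basic} {R : Set σ.Var}
    (hR : α.StepClosed R) {vs : List σ.Var} (hsol : Solved vs α) {ρ : σ.Val}
    (heqs : ∀ e ∈ α.eqs, lhs e ∈ R → ρ e.1 e.2.1 = e.2.2.eval ρ)
    (hfins : ∀ u ∈ α.fins, u ∈ R → (ρ u.1 u.2).IsFinite) :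
    ∃ ρ' : σ.Val, α.Sat ρ' ∧
      ∀ x, x ∈ R ∨ x ∉ α.vars → ρ' x.1 x.2 = ρ x.1 x.2 := by
  obtain ⟨ρ₁, hfin₁, hρ₁⟩ := exists_val_finite_on (fun u hu => (hsol.2.2 u hu).1) hfins
  classical
  set es := α.eqs.filter fun e => lhs e ∉ R
  have hnd : (es.map lhs).Nodup := (List.filter_sublist.map lhs).nodup hsol.1.of_append_left
  have hdec : VarEqsDecrease (idx vs) es := fun e he => hsol.2.1 e (List.mem_of_mem_filter he)
  obtain ⟨ρ', hsat, hfix⟩ := exists_solution hnd (idx vs) hdec ρ₁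
  have hfix' : ∀ x, x ∈ R ∨ x ∉ α.eqs.map lhs → ρ' x.1 x.2 = ρ₁ x.1 x.2 := by
    refine fun x hx => hfix x fun hmem => ?_
    obtain ⟨e, he, rfl⟩ := List.mem_map.1 hmem
    obtain ⟨heα, hnR⟩ := List.mem_filter.1 he
    rcases hx with hx | hx
    · exact of_decide_eq_true hnR hx
    · exact hx (List.mem_map_of_mem heα)
  have hR' : ∀ x ∈ R, ρ' x.1 x.2 = ρ x.1 x.2 := fun x hx =>
    (hfix' x (.inl hx)).trans (hρ₁ x (.inl hx))
  refine ⟨ρ', ⟨fun e he => ?_, fun u hu => ?_⟩, fun x hx => ?_⟩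
  · by_cases hx : lhs e ∈ R
    · rw [hR' _ hx, heqs e he hx, hR.eval_eq he hx hR']
    · exact hsat e (List.mem_filter.2 ⟨he, by simpa using hx⟩)
  · have hu' : u ∉ α.eqs.map lhs := fun h => List.disjoint_of_nodup_append hsol.1 h hu
    exact hfix' u (.inr hu') ▸ hfin₁ u hu
  · rcases hx with hx | hx
    · exact hR' x hx
    · exact (hfix' x (.inr fun h => hx (Basic.mem_vars_of_mem_map_lhs h))).trans
        (hρ₁ x (.inr fun h => hx (.inr h)))

end Sig

theorem reachSet_stepClosed {σ : Sig} (xs : List σ.Var) (α : σ.Basic) :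
    α.StepClosed (reachSet σ xs α) :=
  fun _ _ hxy ⟨v, hv, hvx, hr⟩ => ⟨v, hv, hvx, hr.tail hxy⟩

theorem mem_reachSet {σ : Sig} {xs : List σ.Var} {α : σ.Basic} {v : σ.Var}
    (hv : v ∈ α.vars) (hvx : v ∉ xs) : v ∈ reachSet σ xs α :=
  ⟨v, hv, hvx, .refl⟩

theorem remove_unreachable_general (σ : Sig)
    (xs : List ((s : σ.Srt) × ℕ)) (α : σ.Basic)
    (vs : List ((s : σ.Srt) × ℕ))
    (hsol : Sig.Solved vs α)
    (xs' : List ((s : σ.Srt) × ℕ)) (α' : σ.Basic)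
    (hxs' : ∀ x, x ∈ xs' ↔ x ∈ xs ∧ x ∈ reachSet σ xs α)
    (heqs : ∀ e, e ∈ α'.eqs ↔ e ∈ α.eqs ∧
        (⟨e.1, e.2.1⟩ : (s : σ.Srt) × ℕ) ∈ reachSet σ xs α)
    (hfins : ∀ u, u ∈ α'.fins ↔ u ∈ α.fins ∧ u ∈ reachSet σ xs α) :
    ∀ ρ : σ.Val, SatEx σ xs α ρ ↔ SatEx σ xs' α' ρ := by
  classical
  intro ρ
  have hR := reachSet_stepClosed xs α
  constructor
  · rintro ⟨ρ₁, hagree, hsat⟩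
    refine ⟨fun s n => if ⟨s, n⟩ ∈ reachSet σ xs α then ρ₁ s n else ρ s n,
      fun s n hn => ?_,
      hR.sat_of_agreeOn (fun e he => (heqs e).1 he) (fun u hu => (hfins u).1 hu) hsat
        fun x hx => if_pos hx⟩
    dsimp only
    split_ifs with hx
    exacts [hagree s n fun hxs => hn ((hxs' _).2 ⟨hxs, hx⟩), rfl]
  · rintro ⟨ρ₂, hagree, hsat⟩
    obtain ⟨ρ', hsat', hfix⟩ := hR.exists_sat_extending hsol
      (fun e he hx => hsat.1 e ((heqs e).2 ⟨he, hx⟩))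
      (fun u hu hx => hsat.2 u ((hfins u).2 ⟨hu, hx⟩))
    refine ⟨ρ', fun s n hn => ?_, hsat'⟩
    have hx : ⟨s, n⟩ ∈ reachSet σ xs α ∨ ⟨s, n⟩ ∉ α.vars :=
      (em _).imp_right fun hx hv => hx (mem_reachSet hv hn)
    rw [hfix _ hx, hagree s n fun hxs => hn ((hxs' _).1 hxs).1]

/-- Let `α` be a solved basic formula; let `x̄'` be the variables
of `x̄` reachable in `α` from the free variables of `∃x̄. α` and `α'` the conjunction
of the conjuncts of `α` reachable from those free variables. Then `∃x̄. α` and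
`∃x̄'. α'` are equivalent in the extended theory of trees. -/
theorem remove_unreachable (σ : Sig) (hne : ∀ s : σ.Srt, (σ.Gens s).Nonempty)
    (xs : List ((s : σ.Srt) × ℕ)) (α : σ.Basic)
    (vs : List ((s : σ.Srt) × ℕ)) (hnd : vs.Nodup) (hwf : α.WF)
    (hsol : Sig.Solved vs α)
    (xs' : List ((s : σ.Srt) × ℕ)) (α' : σ.Basic)
    (hxs' : ∀ x, x ∈ xs' ↔ x ∈ xs ∧ x ∈ reachSet σ xs α)
    (heqs : ∀ e, e ∈ α'.eqs ↔ e ∈ α.eqs ∧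
        (⟨e.1, e.2.1⟩ : (s : σ.Srt) × ℕ) ∈ reachSet σ xs α)
    (hfins : ∀ u, u ∈ α'.fins ↔ u ∈ α.fins ∧ u ∈ reachSet σ xs α) :
    ∀ ρ : σ.Val, SatEx σ xs α ρ ↔ SatEx σ xs' α' ρ :=
  remove_unreachable_general σ xs α vs hsol xs' α' hxs' heqs hfins
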